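/- Every element of P¹(F_{3^n}) is eventually periodic under θ: for each x there exist integers i ≥ 0 and k ≥ 1 with θ^{i+k}(x) = θ^i(x). Moreover, the least such i (the preperiod) is at most e, where 2^e ∥ 3^n − 1. -/

import Mathlib

/-
In characteristic 3 the involution `ψ(x) = (x + 1)/(x - 1)` conjugates `θ` to `s(x) = x⁻²`.
The map `s` swaps `0` and `∞` and acts on `F^×` as `u ↦ u ^ (-2)`, so `s^e(u) = u ^ (-2)^e` lies
in the subgroup of odd order `(3^n - 1) / 2^e`, where `-2` is invertible modulo the order of every
element; hence `s^e(y)` is periodic for every `y`, and transporting back through `ψ` so is `θ^e(x)`.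
-/

open OnePoint

variable (F : Type*) [Field F] [DecidableEq F]

/-- The map `θ(x) = x + x⁻¹`, with `θ(0) = θ(∞) = ∞`. -/
def theta : OnePoint F → OnePoint F
  | Option.some x => if x = 0 then ∞ else Option.some (x + x⁻¹)
  | Option.none => ∞

/-- The inverse-square map `s(x) = x⁻²`, with `s(0) = ∞`, `s(∞) = 0`. -/
def sMap : OnePoint F → OnePoint F
  | Option.some x => if x = 0 then ∞ else Option.some (x⁻¹ ^ 2)
  | Option.none => Option.some 0

/-- The involution `ψ(x) = (x+1)/(x-1)`, with `ψ(1) = ∞`, `ψ(∞) = 1`. -/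
def psi : OnePoint F → OnePoint F
  | Option.some x => if x = 1 then ∞ else Option.some ((x + 1) / (x - 1))
  | Option.none => Option.some 1

open Function

section Group

variable {G : Type*} [Group G]

theorem mem_periodicPts_zpow {x : G} {a : ℤ} (hx : IsOfFinOrder x)
    (ha : IsCoprime a (orderOf x)) : x ∈ periodicPts (· ^ a : G → G) := by
  have hunit : IsUnit (a : ZMod (orderOf x)) :=
    (ZMod.coe_int_isUnit_iff_isCoprime a _).2 ha.symm
  refine ⟨(orderOf x).totient, Nat.totient_pos.2 hx.orderOf_pos, ?_⟩
  rw [IsPeriodicPt, IsFixedPt, zpow_iterate]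
  conv_rhs => rw [← zpow_one x]
  rw [zpow_eq_zpow_iff_modEq, ← ZMod.intCast_eq_intCast_iff]
  push_cast
  exact congrArg Units.val (ZMod.pow_totient hunit.unit)

theorem odd_orderOf_zpow_neg_two_pow {x : G} {e m : ℕ} (hx : x ^ (2 ^ e * m) = 1)
    (hm : Odd m) : Odd (orderOf (x ^ (-2 : ℤ) ^ e)) := by
  refine hm.of_dvd_nat (orderOf_dvd_of_pow_eq_one ?_)
  calc (x ^ (-2 : ℤ) ^ e) ^ m = (x ^ (2 ^ e * m)) ^ ((-1 : ℤ) ^ e) := by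
        rw [← zpow_natCast, ← zpow_natCast, ← zpow_mul, ← zpow_mul, neg_pow]
        push_cast
        ring_nf
    _ = 1 := by rw [hx, one_zpow]

end Group

variable {F}

@[simp] lemma theta_infty : theta F ∞ = ∞ := rfl
@[simp] lemma sMap_infty : sMap F ∞ = (0 : F) := rfl
@[simp] lemma psi_infty : psi F ∞ = (1 : F) := rfl
lemma theta_coe (x : F) : theta F x = if x = 0 then ∞ else ↑(x + x⁻¹) := rfl
lemma sMap_coe (x : F) : sMap F x = if x = 0 then ∞ else ↑(x⁻¹ ^ 2) := rfl
lemma psi_coe (x : F) : psi F x = if x = 1 then ∞ else ↑((x + 1) / (x - 1)) := rfl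

lemma psi_involutive (h2 : (2 : F) ≠ 0) : Involutive (psi F) := by
  intro x
  induction x with
  | infty => simp [psi_coe]
  | coe a =>
    by_cases ha : a = 1
    · simp [ha, psi_coe]
    have ha' : a - 1 ≠ 0 := sub_ne_zero.2 ha
    have hb : (a + 1) / (a - 1) ≠ 1 := by
      rw [Ne, div_eq_one_iff_eq ha']
      intro h
      exact h2 (by linear_combination h)
    simp only [psi_coe, ha, hb, if_false, coe_eq_coe]
    rw [div_eq_iff (sub_ne_zero.2 hb)]
    field_simp
    ring

lemma psi_semiconj_sMap_theta (h3 : (3 : F) = 0) : Semiconj (psi F) (sMap F) (theta F) := by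
  intro x
  induction x with
  | infty => simp [psi_coe, theta_coe]; linear_combination -h3
  | coe a =>
    by_cases ha0 : a = 0
    · simp [ha0, sMap_coe, psi_coe, theta_coe]
      linear_combination h3
    by_cases ha1 : a = 1
    · simp [ha1, sMap_coe, psi_coe]
    by_cases ham : a = -1
    · have : (-1 : F) ≠ 1 := fun h => one_ne_zero (by linear_combination h3 + h)
      simp [ham, sMap_coe, psi_coe, theta_coe, this]
    have hm : a - 1 ≠ 0 := sub_ne_zero.2 ha1
    have hp : a + 1 ≠ 0 := fun h => ham (by linear_combination h)
    have hsq : a ^ 2 ≠ 1 := by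
      rw [Ne, sq_eq_one_iff]
      tauto
    have hsq' : 1 - a ^ 2 ≠ 0 := sub_ne_zero.2 hsq.symm
    have hinv : a⁻¹ ^ 2 ≠ 1 := by rwa [inv_pow, Ne, inv_eq_one]
    have hψ : (a + 1) / (a - 1) ≠ 0 := div_ne_zero hp hm
    simp only [sMap_coe, psi_coe, theta_coe, ha0, ha1, hinv, hψ, if_false, coe_eq_coe]
    field_simp
    linear_combination (a ^ 4 - 1) * h3

lemma units_coe_semiconj_sMap :
    Semiconj (fun u : Fˣ => ((u : F) : OnePoint F)) (· ^ (-2 : ℤ)) (sMap F) := by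
  intro u
  simp [sMap_coe, zpow_neg]

lemma sMap_isPeriodicPt_infty : IsPeriodicPt (sMap F) 2 ∞ := by
  simp [IsPeriodicPt, IsFixedPt, sMap_coe]

theorem sMap_iterate_mem_periodicPts [Fintype F] {e m : ℕ}
    (hcard : Fintype.card F - 1 = 2 ^ e * m) (hm : Odd m) (y : OnePoint F) :
    (sMap F)^[e] y ∈ periodicPts (sMap F) := by
  induction y with
  | infty => exact mk_mem_periodicPts two_pos (sMap_isPeriodicPt_infty.apply_iterate e)
  | coe a =>
    obtain rfl | ha := eq_or_ne a 0
    · exact mk_mem_periodicPts two_pos (sMap_isPeriodicPt_infty.apply.apply_iterate e)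
    lift a to Fˣ using ha.isUnit
    have hodd : Odd (orderOf (a ^ (-2 : ℤ) ^ e)) := by
      refine odd_orderOf_zpow_neg_two_pow ?_ hm
      rw [← hcard, ← Fintype.card_units, pow_card_eq_one]
    have hcop : IsCoprime (-2 : ℤ) (orderOf (a ^ (-2 : ℤ) ^ e)) :=
      (Nat.isCoprime_iff_coprime.2 (Nat.coprime_two_left.2 hodd)).neg_left
    rw [← units_coe_semiconj_sMap.iterate_right e a]
    apply units_coe_semiconj_sMap.mapsTo_periodicPts
    rw [zpow_iterate]
    exact mem_periodicPts_zpow (isOfFinOrder_of_finite _) hcop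

theorem odd_of_not_two_pow_succ_dvd {e m : ℕ} (h : ¬ 2 ^ (e + 1) ∣ 2 ^ e * m) : Odd m := by
  rw [← Nat.not_even_iff_odd, even_iff_two_dvd]
  rintro ⟨t, rfl⟩
  exact h ⟨t, by ring⟩

theorem eventually_periodic_general [Fintype F] (n : ℕ)
    (hF : Fintype.card F = 3 ^ n) (e : ℕ)
    (he : 2 ^ e ∣ 3 ^ n - 1 ∧ ¬ 2 ^ (e + 1) ∣ 3 ^ n - 1) :
    ∀ x : OnePoint F, ∃ i k : ℕ, i ≤ e ∧ 0 < k ∧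
      (theta F)^[i + k] x = (theta F)^[i] x := by
  intro x
  have h3 : (3 : F) = 0 := by
    have := charP_of_card_eq_prime_pow hF
    exact_mod_cast CharP.cast_eq_zero F 3
  obtain ⟨m, hm⟩ := he.1
  have hψ := psi_involutive (F := F) (fun h => one_ne_zero (by linear_combination h3 - h))
  have hconj := (psi_semiconj_sMap_theta h3).iterate_right e (psi F x)
  rw [hψ x] at hconj
  obtain ⟨k, hk, hper⟩ :=
    sMap_iterate_mem_periodicPts (hF ▸ hm) (odd_of_not_two_pow_succ_dvd (hm ▸ he.2)) (psi F x)
  refine ⟨e, k, le_rfl, hk, ?_⟩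
  rw [add_comm, iterate_add_apply, ← hconj]
  exact hper.map (psi_semiconj_sMap_theta h3)

theorem eventually_periodic [Fintype F] (n : ℕ) (hn : 0 < n)
    (hF : Fintype.card F = 3 ^ n) (e : ℕ)
    (he : 2 ^ e ∣ 3 ^ n - 1 ∧ ¬ 2 ^ (e + 1) ∣ 3 ^ n - 1) :
    ∀ x : OnePoint F, ∃ i k : ℕ, i ≤ e ∧ 0 < k ∧
      (theta F)^[i + k] x = (theta F)^[i] x :=
  eventually_periodic_general n hF e he
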